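/- arXiv:2409.09963 — 2 statements merged into one kernel-verified Lean document; each statement's English description precedes it below -/
import Mathlib

section
/- Let J : ℝ^m → ℝ be convex and differentiable, K_1 = {w ∈ ℝ^m : 0 ≤ w ≤ 1, ∑_k w_k ≤ m_0} with 1 ≤ m_0 < m, and suppose coordinates are ordered so that ∇J(w)_1 ≤ … ≤ ∇J(w)_m. If w ∈ K_1 is a minimizer of J over K_1 and ∇J(w)_{m_0} < 0, then ∑_{k=1}^m w_k = m_0. -/
theorem budget_active_at_optimum (m m0 : ℕ) (hm0 : 1 ≤ m0) (hm0m : m0 < m)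
    (J : (Fin m → ℝ) → ℝ) (hJconv : ConvexOn ℝ Set.univ J)
    (hJdiff : Differentiable ℝ J)
    (K1 : Set (Fin m → ℝ))
    (hK1 : K1 = {w | (∀ k, 0 ≤ w k ∧ w k ≤ 1) ∧ ∑ k, w k ≤ (m0 : ℝ)})
    (w : Fin m → ℝ) (hw : w ∈ K1)
    (g : Fin m → ℝ) (hg : ∀ v, fderiv ℝ J w v = ∑ k, g k * v k)
    (hord : Monotone g)
    (hmin : IsMinOn J K1 w)
    (hneg : g ⟨m0 - 1, lt_trans (Nat.sub_lt hm0 one_pos) hm0m⟩ < 0) :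
    ∑ k, w k = (m0 : ℝ) := by
  classical
  set i : Fin m := ⟨m0 - 1, lt_trans (Nat.sub_lt hm0 one_pos) hm0m⟩ with hi
  subst hK1
  obtain ⟨hbox, hsum⟩ := hw
  by_contra hne
  have hsumlt : ∑ k, w k < (m0 : ℝ) := lt_of_le_of_ne hsum hne
  -- find a coordinate k ≤ i with w k < 1
  have hex : ∃ k : Fin m, k ≤ i ∧ w k < 1 := by
    by_contra h
    push_neg at h
    have h1 : ∀ k ∈ Finset.Iic i, (1 : ℝ) ≤ w k := fun k hk =>
      h k (Finset.mem_Iic.mp hk)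
    have hcard : (Finset.Iic i).card = m0 := by
      rw [Fin.card_Iic]
      simp [hi]
      omega
    have : (m0 : ℝ) ≤ ∑ k ∈ Finset.Iic i, w k := by
      calc (m0 : ℝ) = ∑ _k ∈ Finset.Iic i, (1 : ℝ) := by
            simp [hcard]
        _ ≤ ∑ k ∈ Finset.Iic i, w k := Finset.sum_le_sum h1
    have h2 : ∑ k ∈ Finset.Iic i, w k ≤ ∑ k, w k :=
      Finset.sum_le_sum_of_subset_of_nonneg (Finset.subset_univ _)
        (fun k _ _ => (hbox k).1)
    linarith
  obtain ⟨k, hki, hwk1⟩ := hex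
  have hgk : g k < 0 := lt_of_le_of_lt (hord hki) hneg
  -- small step size
  set δ : ℝ := min (1 - w k) ((m0 : ℝ) - ∑ j, w j) with hδ
  have hδpos : 0 < δ := lt_min (by linarith) (by linarith)
  set y : Fin m → ℝ := δ • (Pi.single k (1 : ℝ) : Fin m → ℝ) with hy
  -- segment from w to w + y stays in K1
  have hseg : segment ℝ w (w + y) ⊆
      {w | (∀ k, 0 ≤ w k ∧ w k ≤ 1) ∧ ∑ k, w k ≤ (m0 : ℝ)} := by
    intro z hz
    obtain ⟨a, b, ha, hb, hab, rfl⟩ := hz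
    have hz1 : a • w + b • (w + y) = w + (b * δ) • (Pi.single k (1 : ℝ) : Fin m → ℝ) := by
      rw [hy]
      have hba : a = 1 - b := by linarith
      subst hba
      module
    rw [hz1]
    have hbδ0 : 0 ≤ b * δ := mul_nonneg hb hδpos.le
    have hbδ : b * δ ≤ δ := by
      nlinarith [le_min_iff.mp (le_refl δ)]
    constructor
    · intro j
      by_cases hjk : j = k
      · subst hjk
        simp only [Pi.add_apply, Pi.smul_apply, Pi.single_eq_same, smul_eq_mul,
          mul_one]
        have hδ1 : δ ≤ 1 - w j := min_le_left _ _
        constructor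
        · have := (hbox j).1; linarith
        · linarith
      · simp only [Pi.add_apply, Pi.smul_apply, Pi.single_eq_of_ne hjk,
          smul_eq_mul, mul_zero, add_zero]
        exact hbox j
    · have : ∑ j, (w + (b * δ) • (Pi.single k (1 : ℝ) : Fin m → ℝ)) j
          = (∑ j, w j) + b * δ := by
        simp [Finset.sum_add_distrib, ← Finset.mul_sum, Finset.sum_pi_single']
      rw [this]
      have hδ2 : δ ≤ (m0 : ℝ) - ∑ j, w j := min_le_right _ _
      linarith
  have hycone : y ∈ posTangentConeAt
      {w | (∀ k, 0 ≤ w k ∧ w k ≤ 1) ∧ ∑ k, w k ≤ (m0 : ℝ)} w := by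
    have := sub_mem_posTangentConeAt_of_segment_subset hseg
    simpa using this
  have hlmin : IsLocalMinOn J
      {w | (∀ k, 0 ≤ w k ∧ w k ≤ 1) ∧ ∑ k, w k ≤ (m0 : ℝ)} w :=
    hmin.filter_mono inf_le_right
  have hfd : HasFDerivWithinAt J (fderiv ℝ J w)
      {w | (∀ k, 0 ≤ w k ∧ w k ≤ 1) ∧ ∑ k, w k ≤ (m0 : ℝ)} w :=
    (hJdiff w).hasFDerivAt.hasFDerivWithinAt
  have hnn : 0 ≤ fderiv ℝ J w y := hlmin.hasFDerivWithinAt_nonneg hfd hycone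
  rw [hg] at hnn
  have hval : ∑ j, g j * y j = δ * g k := by
    rw [hy]
    rw [Finset.sum_eq_single k]
    · simp [mul_comm]
    · intro j _ hjk
      simp [Pi.single_eq_of_ne hjk]
    · simp
  rw [hval] at hnn
  nlinarith
end

section
/- Let v ∈ ℝ^m with v_1 ≤ … ≤ v_m and v_m < 0, and let 1 ≤ m_0 < m with v_{m_0} < v_{m_0+1}. Then every minimizer w of w ↦ ⟨v, w⟩ over K_1 = {w ∈ ℝ^m : 0 ≤ w ≤ 1, ∑_k w_k ≤ m_0} satisfies w_k = 1 for all k ≤ m_0 and w_k = 0 for all k > m_0; in particular the minimizer is binary. -/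
theorem linear_min_unique_binary (m m0 : ℕ) (hm0 : 1 ≤ m0) (hm0m : m0 < m)
    (v : Fin m → ℝ) (hord : Monotone v)
    (hneg : v ⟨m - 1, Nat.sub_lt (lt_of_le_of_lt (Nat.zero_le _) hm0m) one_pos⟩ < 0)
    (hsep : v ⟨m0 - 1, lt_trans (Nat.sub_lt hm0 one_pos) hm0m⟩ < v ⟨m0, hm0m⟩)
    (w : Fin m → ℝ)
    (hw : w ∈ {w : Fin m → ℝ | (∀ k, 0 ≤ w k ∧ w k ≤ 1) ∧ ∑ k, w k ≤ (m0 : ℝ)})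
    (hmin : IsMinOn (fun w : Fin m → ℝ => ∑ k, v k * w k)
        {w | (∀ k, 0 ≤ w k ∧ w k ≤ 1) ∧ ∑ k, w k ≤ (m0 : ℝ)} w) :
    ∀ k : Fin m, w k = if (k : ℕ) < m0 then 1 else 0 := by
  obtain ⟨hbox, hsum⟩ := hw
  set c : ℝ := v ⟨m0, hm0m⟩ with hc
  set ws : Fin m → ℝ := fun k => if (k : ℕ) < m0 then 1 else 0 with hws
  have hcneg : c < 0 := by
    refine lt_of_le_of_lt (hord ?_) hneg
    simp only [Fin.mk_le_mk]; omega
  have hvlt : ∀ k : Fin m, (k : ℕ) < m0 → v k < c := by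
    intro k hk
    refine lt_of_le_of_lt (hord ?_) hsep
    simp only [Fin.le_def]; omega
  have hvge : ∀ k : Fin m, m0 ≤ (k : ℕ) → c ≤ v k := by
    intro k hk
    exact hord (by simp only [Fin.le_def]; omega)
  have hws_sum : ∑ k, ws k = (m0 : ℝ) := by
    rw [hws, Fin.sum_univ_eq_sum_range (fun i => if i < m0 then (1:ℝ) else 0)]
    rw [← Finset.sum_subset (Finset.range_subset_range.2 hm0m.le)
      (by intro x hx hx'; simp only [Finset.mem_range] at hx' ⊢
          simp only [if_neg hx'])]
    rw [Finset.sum_ite_of_true (fun x hx => Finset.mem_range.1 hx)]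
    simp
  have hws_mem : ws ∈ {w : Fin m → ℝ | (∀ k, 0 ≤ w k ∧ w k ≤ 1) ∧ ∑ k, w k ≤ (m0 : ℝ)} := by
    refine ⟨fun k => ?_, le_of_eq hws_sum⟩
    by_cases h : (k:ℕ) < m0 <;> simp [hws, h]
  have hle : ∑ k, v k * w k ≤ ∑ k, v k * ws k := hmin hws_mem
  set t : Fin m → ℝ := fun k => (v k - c) * (ws k - w k) with ht
  have ht_nonpos : ∀ k, t k ≤ 0 := by
    intro k
    by_cases h : (k:ℕ) < m0
    · have h1 : v k - c < 0 := sub_neg.2 (hvlt k h)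
      have h2 : 0 ≤ ws k - w k := by
        simp only [hws, if_pos h]
        linarith [(hbox k).2]
      exact mul_nonpos_of_nonpos_of_nonneg h1.le h2
    · have h1 : 0 ≤ v k - c := sub_nonneg.2 (hvge k (le_of_not_gt h))
      have h2 : ws k - w k ≤ 0 := by
        simp only [hws, if_neg h]
        linarith [(hbox k).1]
      exact mul_nonpos_of_nonneg_of_nonpos h1 h2
  have hsum_t : ∑ k, t k =
      ((∑ k, v k * ws k) - (∑ k, v k * w k)) + (-c) * ((∑ k, ws k) - ∑ k, w k) := by
    rw [mul_sub, Finset.mul_sum, Finset.mul_sum, ← Finset.sum_sub_distrib,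
      ← Finset.sum_sub_distrib, ← Finset.sum_add_distrib]
    exact Finset.sum_congr rfl fun k _ => by simp only [ht]; ring
  have h1 : 0 ≤ (∑ k, v k * ws k) - (∑ k, v k * w k) := sub_nonneg.2 hle
  have h2 : 0 ≤ (-c) * ((∑ k, ws k) - ∑ k, w k) := by
    apply mul_nonneg (by linarith)
    rw [hws_sum]; linarith
  have h3 : ∑ k, t k ≤ 0 := Finset.sum_nonpos (fun k _ => ht_nonpos k)
  have h0 : ∑ k, t k = 0 := le_antisymm h3 (by rw [hsum_t]; linarith)
  have hB : (-c) * ((∑ k, ws k) - ∑ k, w k) = 0 := by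
    rw [hsum_t] at h0; linarith
  have hsw : ∑ k, w k = (m0 : ℝ) := by
    rcases mul_eq_zero.1 hB with h | h
    · exfalso; linarith
    · rw [hws_sum] at h; linarith
  have hall0 : ∀ k ∈ Finset.univ, t k = 0 :=
    (Finset.sum_eq_zero_iff_of_nonpos (fun k _ => ht_nonpos k)).1 h0
  have hw1 : ∀ k : Fin m, (k : ℕ) < m0 → w k = 1 := by
    intro k hk
    have htk := hall0 k (Finset.mem_univ k)
    have hne : v k - c ≠ 0 := ne_of_lt (sub_neg.2 (hvlt k hk))
    have hz : ws k - w k = 0 := by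
      rcases mul_eq_zero.1 htk with h | h
      · exact absurd h hne
      · exact h
    simp only [hws, if_pos hk] at hz; linarith
  intro k
  by_cases hk : (k:ℕ) < m0
  · rw [if_pos hk]; exact hw1 k hk
  · rw [if_neg hk]
    have hzero : ∑ j, (w j - ws j) = 0 := by
      rw [Finset.sum_sub_distrib, hsw, hws_sum]; ring
    have hnn : ∀ j ∈ Finset.univ, 0 ≤ w j - ws j := by
      intro j _
      by_cases hj : (j:ℕ) < m0
      · simp [hws, hj, hw1 j hj]
      · simp only [hws, if_neg hj]
        linarith [(hbox j).1]
    have hk0 := (Finset.sum_eq_zero_iff_of_nonneg hnn).1 hzero k (Finset.mem_univ k)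
    simp only [hws, if_neg hk] at hk0; linarith
end
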